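/- Let G be a vertex-weighted graph with positive weights, let v be a vertex with w(v) ≤ w(u) for all u ∈ N[v], and let G' be obtained from G by the modified weighted struction at v. Then α_w(G) ≥ α_w(G') + w(v), i.e., for every independent set I' of G' there exists an independent set I of G whose weight in G is at least the weight of I' in G' plus w(v). -/
import Mathlib


/-!
Modified weighted struction: applied at a vertex `v` whose weight is minimum
in its closed neighborhood.  It removes `v`, lowers the weight of every
neighbor of `v` by `w v`, adds a new vertex `v_{x,y}` of weight `w y` for
every pair of non-adjacent neighbors `x < y` of `v`, connects every neighbor
`k` of `v` to every new vertex `v_{x,y}` with `x ≠ k`, and turns `N(v)` into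
a clique.
-/

open scoped Classical

variable {V : Type*}

/-- `I` is an independent set of `G`. -/
def IsIndep (G : SimpleGraph V) (I : Finset V) : Prop :=
  ∀ x ∈ I, ∀ y ∈ I, ¬ G.Adj x y

/-- The weighted independence number of `G` with weights `w`: the supremum
(for a finite graph, the maximum) of the weights of independent sets. -/
noncomputable def alphaW (G : SimpleGraph V) (w : V → ℝ) : ℝ :=
  sSup {r : ℝ | ∃ I : Finset V, IsIndep G I ∧ r = ∑ x ∈ I, w x}

/-- Old vertices of the struction at `v`: all vertices except `v`. -/
abbrev StrOld (v : V) : Type _ := {u : V // u ≠ v}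

/-- New vertices of the struction at `v`: pairs of non-adjacent neighbors
`x < y` of `v` (with respect to the fixed linear order on the vertices). -/
abbrev StrNew [LinearOrder V] (G : SimpleGraph V) (v : V) : Type _ :=
  {p : V × V // G.Adj v p.1 ∧ G.Adj v p.2 ∧ p.1 < p.2 ∧ ¬ G.Adj p.1 p.2}

/-- Adjacency for the modified weighted struction at `v`:
the edges of the original struction, plus an edge between each neighbor `k`
of `v` and each new vertex `v_{x,y}` with `x ≠ k`, plus all edges making
`N(v)` a clique. -/
def modRel [LinearOrder V] (G : SimpleGraph V) (v : V) :
    StrOld v ⊕ StrNew G v → StrOld v ⊕ StrNew G v → Prop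
  | Sum.inl u, Sum.inl u' => G.Adj u.val u'.val ∨ (G.Adj v u.val ∧ G.Adj v u'.val)
  | Sum.inl u, Sum.inr p =>
      G.Adj u.val p.val.1 ∨ G.Adj u.val p.val.2 ∨ (G.Adj v u.val ∧ u.val ≠ p.val.1)
  | Sum.inr p, Sum.inl u =>
      G.Adj u.val p.val.1 ∨ G.Adj u.val p.val.2 ∨ (G.Adj v u.val ∧ u.val ≠ p.val.1)
  | Sum.inr p, Sum.inr q => p.val.1 ≠ q.val.1 ∨ G.Adj p.val.2 q.val.2

/-- The graph obtained from `G` by the modified weighted struction at `v`. -/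
def modStruction [LinearOrder V] (G : SimpleGraph V) (v : V) :
    SimpleGraph (StrOld v ⊕ StrNew G v) :=
  SimpleGraph.fromRel (modRel G v)

/-- Weights after the modified struction: neighbors of `v` have their weight
lowered by `w v`, other old vertices keep their weight, and each new vertex
`v_{x,y}` has weight `w y`. -/
noncomputable def modWeight [LinearOrder V] (G : SimpleGraph V) (w : V → ℝ) (v : V) :
    StrOld v ⊕ StrNew G v → ℝ
  | Sum.inl u => if G.Adj v u.val then w u.val - w v else w u.val
  | Sum.inr p => w p.val.2

/-- Projection of struction vertices back to `V`: an old vertex goes to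
itself, a new vertex `v_{x,y}` goes to `y`. -/
def strProj [LinearOrder V] (G : SimpleGraph V) (v : V) :
    StrOld v ⊕ StrNew G v → V
  | Sum.inl u => u.val
  | Sum.inr p => p.val.2

/-- `α_w(G) ≥ α_w(G') + w(v)` for the modified weighted
struction: for every independent set `I'` of `G'` there is an independent
set `I` of `G` whose weight in `G` is at least the weight of `I'` in `G'`
plus `w v`; consequently the weighted independence numbers satisfy the
corresponding inequality. -/
theorem modified_struction_lower_bound [Fintype V] [LinearOrder V]
    (G : SimpleGraph V) (w : V → ℝ) (hw : ∀ u, 0 < w u) (v : V)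
    (hv : ∀ u, (u = v ∨ G.Adj v u) → w v ≤ w u) :
    (∀ I' : Finset (StrOld v ⊕ StrNew G v), IsIndep (modStruction G v) I' →
        ∃ I : Finset V, IsIndep G I ∧
          (∑ a ∈ I', modWeight G w v a) + w v ≤ ∑ x ∈ I, w x) ∧
      alphaW (modStruction G v) (modWeight G w v) + w v ≤ alphaW G w := by
  classical
  have main : ∀ I' : Finset (StrOld v ⊕ StrNew G v), IsIndep (modStruction G v) I' →
      ∃ I : Finset V, IsIndep G I ∧
        (∑ a ∈ I', modWeight G w v a) + w v ≤ ∑ x ∈ I, w x := by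
    intro I' hI'
    -- the projection map
    have hrel : ∀ a ∈ I', ∀ b ∈ I', a ≠ b → ¬ modRel G v a b := by
      intro a ha b hb hab hr
      exact hI' a ha b hb (by
        simp only [modStruction, SimpleGraph.fromRel_adj]
        exact ⟨hab, Or.inl hr⟩)
    -- injectivity of the projection on I'
    have hinj : ∀ a ∈ I', ∀ b ∈ I', strProj G v a = strProj G v b → a = b := by
      intro a ha b hb hfab
      by_contra hne
      have hr := hrel a ha b hb hne
      match a, b with
      | Sum.inl u, Sum.inl u' =>
          exact hne (by
            have : u = u' := Subtype.ext (by simpa [strProj] using hfab)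
            rw [this])
      | Sum.inl u, Sum.inr q =>
          have h1 : u.val = q.val.2 := by simpa [strProj] using hfab
          exact hr (Or.inr (Or.inr ⟨h1 ▸ q.prop.2.1, by rw [h1]; exact (q.prop.2.2.1).ne'⟩))
      | Sum.inr q, Sum.inl u =>
          have h1 : u.val = q.val.2 := by simpa [strProj] using hfab.symm
          exact hr (Or.inr (Or.inr ⟨h1 ▸ q.prop.2.1, by rw [h1]; exact (q.prop.2.2.1).ne'⟩))
      | Sum.inr q, Sum.inr q' =>
          have h2 : q.val.2 = q'.val.2 := by simpa [strProj] using hfab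
          have h1 : q.val.1 = q'.val.1 := by
            by_contra h
            exact hr (Or.inl h)
          exact hne (by
            have : q = q' := Subtype.ext (Prod.ext h1 h2)
            rw [this])
    -- the image of I' is independent in G
    have himg : IsIndep G (I'.image (strProj G v)) := by
      intro x hx y hy hxy
      obtain ⟨a, ha, rfl⟩ := Finset.mem_image.mp hx
      obtain ⟨b, hb, rfl⟩ := Finset.mem_image.mp hy
      have hne : a ≠ b := by
        rintro rfl; exact G.irrefl hxy
      have hr := hrel a ha b hb hne
      match a, b with
      | Sum.inl u, Sum.inl u' => exact hr (Or.inl (by simpa [strProj] using hxy))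
      | Sum.inl u, Sum.inr q => exact hr (Or.inr (Or.inl (by simpa [strProj] using hxy)))
      | Sum.inr q, Sum.inl u => exact hr (Or.inr (Or.inl (by simpa [strProj] using hxy.symm)))
      | Sum.inr q, Sum.inr q' => exact hr (Or.inr (by simpa [strProj] using hxy))
    have hsumimg : ∑ x ∈ I'.image (strProj G v), w x = ∑ a ∈ I', w (strProj G v a) :=
      Finset.sum_image hinj
    -- pointwise weight comparison
    have hdiff : ∀ a ∈ I', modWeight G w v a ≤ w (strProj G v a) := by
      rintro (u | q) _
      · simp only [modWeight, strProj]
        split_ifs with h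
        · linarith [(hw v).le]
        · exact le_rfl
      · simp [modWeight, strProj]
    by_cases hk : ∃ k : StrOld v, Sum.inl k ∈ I' ∧ G.Adj v k.val
    · -- an old neighbor of v is in I': the image alone gains w v
      obtain ⟨k, hkmem, hkadj⟩ := hk
      refine ⟨I'.image (strProj G v), himg, ?_⟩
      rw [hsumimg]
      have h1 : w v ≤ ∑ a ∈ I', (w (strProj G v a) - modWeight G w v a) := by
        have := Finset.single_le_sum
          (f := fun a => w (strProj G v a) - modWeight G w v a)
          (fun a ha => sub_nonneg.mpr (hdiff a ha)) hkmem
        simpa [modWeight, strProj, hkadj] using this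
      rw [Finset.sum_sub_distrib] at h1
      linarith
    · push_neg at hk
      -- no old neighbor of v is in I'
      have hnonbr : ∀ u : StrOld v, Sum.inl u ∈ I' → ¬ G.Adj v u.val := fun u hu => hk u hu
      have hsumle : ∑ a ∈ I', modWeight G w v a ≤ ∑ a ∈ I', w (strProj G v a) :=
        Finset.sum_le_sum hdiff
      by_cases hp : ∃ p : StrNew G v, Sum.inr p ∈ I'
      · -- a new vertex exists: add x = p₀.1
        obtain ⟨p0, hp0⟩ := hp
        set x := p0.val.1 with hx
        have hxadj : G.Adj v x := p0.prop.1
        -- all new vertices in I' share first coordinate x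
        have hfst : ∀ q : StrNew G v, Sum.inr q ∈ I' → q.val.1 = x := by
          intro q hq
          by_cases hqe : q = p0
          · rw [hqe]
          · have hr := hrel _ hq _ hp0 (by simpa using hqe)
            by_contra h
            exact hr (Or.inl h)
        have hxnot : x ∉ I'.image (strProj G v) := by
          intro hmem
          obtain ⟨a, ha, hfa⟩ := Finset.mem_image.mp hmem
          match a with
          | Sum.inl u =>
              exact hnonbr u ha (by
                have : u.val = x := by simpa [strProj] using hfa
                rw [this]; exact hxadj)
          | Sum.inr q =>
              have h2 : q.val.2 = x := by simpa [strProj] using hfa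
              have h1 : q.val.1 = x := hfst q ha
              have hlt := q.prop.2.2.1
              rw [h1, h2] at hlt
              exact lt_irrefl x hlt
        have hxnadj : ∀ y ∈ I'.image (strProj G v), ¬ G.Adj x y := by
          intro y hy hadj
          obtain ⟨a, ha, rfl⟩ := Finset.mem_image.mp hy
          match a with
          | Sum.inl u =>
              have hr := hrel _ ha _ hp0 (by simp)
              exact hr (Or.inl (by simpa [strProj] using hadj.symm))
          | Sum.inr q =>
              have h1 : q.val.1 = x := hfst q ha
              exact q.prop.2.2.2 (by rw [h1]; simpa [strProj] using hadj)
        refine ⟨insert x (I'.image (strProj G v)), ?_, ?_⟩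
        · intro a ha b hb hadj
          rcases Finset.mem_insert.mp ha with rfl | ha' <;>
            rcases Finset.mem_insert.mp hb with rfl | hb'
          · exact G.irrefl hadj
          · exact hxnadj b hb' hadj
          · exact hxnadj a ha' hadj.symm
          · exact himg a ha' b hb' hadj
        · rw [Finset.sum_insert hxnot, hsumimg]
          have hwx : w v ≤ w x := hv x (Or.inr hxadj)
          linarith
      · -- no new vertex: add v itself
        push_neg at hp
        have hvnot : v ∉ I'.image (strProj G v) := by
          intro hmem
          obtain ⟨a, ha, hfa⟩ := Finset.mem_image.mp hmem
          match a with
          | Sum.inl u => exact u.prop (by simpa [strProj] using hfa)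
          | Sum.inr q => exact hp q ha
        have hvnadj : ∀ y ∈ I'.image (strProj G v), ¬ G.Adj v y := by
          intro y hy hadj
          obtain ⟨a, ha, rfl⟩ := Finset.mem_image.mp hy
          match a with
          | Sum.inl u => exact hnonbr u ha (by simpa [strProj] using hadj)
          | Sum.inr q => exact hp q ha
        refine ⟨insert v (I'.image (strProj G v)), ?_, ?_⟩
        · intro a ha b hb hadj
          rcases Finset.mem_insert.mp ha with rfl | ha' <;>
            rcases Finset.mem_insert.mp hb with rfl | hb'
          · exact G.irrefl hadj
          · exact hvnadj b hb' hadj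
          · exact hvnadj a ha' hadj.symm
          · exact himg a ha' b hb' hadj
        · rw [Finset.sum_insert hvnot, hsumimg]
          linarith
  refine ⟨main, ?_⟩
  have hSbdd : BddAbove {r : ℝ | ∃ I : Finset V, IsIndep G I ∧ r = ∑ x ∈ I, w x} := by
    refine ⟨∑ x, w x, ?_⟩
    rintro r ⟨I, hI, rfl⟩
    exact Finset.sum_le_sum_of_subset_of_nonneg (Finset.subset_univ I)
      (fun i _ _ => (hw i).le)
  have hne : {r : ℝ | ∃ I' : Finset (StrOld v ⊕ StrNew G v),
      IsIndep (modStruction G v) I' ∧ r = ∑ a ∈ I', modWeight G w v a}.Nonempty := by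
    refine ⟨0, ∅, ?_, by simp⟩
    intro a ha
    exact absurd ha (Finset.notMem_empty a)
  have h : alphaW (modStruction G v) (modWeight G w v) ≤ alphaW G w - w v := by
    rw [alphaW]
    apply csSup_le hne
    rintro r ⟨I', hI', rfl⟩
    obtain ⟨I, hI, hle⟩ := main I' hI'
    have h2 : ∑ x ∈ I, w x ≤ alphaW G w := le_csSup hSbdd ⟨I, hI, rfl⟩
    linarith
  linarith
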